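/- arXiv:0907.3974 — 3 statements merged into one kernel-verified Lean document; each statement's English description precedes it below -/
import Mathlib

section
/- For every a ∈ F_q*, the sum of λ(a·(α² + α)^{-1}) over all α ∈ F_q with α ≠ 0 and α ≠ 1 equals K(a) − 1. -/
open Finset

/-- The trace map `tr : F_q → F_2 ⊆ F_q`, `tr x = x + x² + ⋯ + x^(2^(r-1))`. -/
def trF {F : Type*} [Field F] (r : ℕ) (x : F) : F :=
  ∑ i ∈ Finset.range r, x ^ (2 ^ i)

/-- The canonical additive character `λ(x) = (-1)^(tr x) ∈ ℤ` of `F_q`. -/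
def lamF {F : Type*} [Field F] [DecidableEq F] (r : ℕ) (x : F) : ℤ :=
  if trF r x = 0 then 1 else -1

/-- The Kloosterman sum `K(a) = ∑_{α ∈ F_q*} λ(α + a·α⁻¹)`. -/
def Kloos {F : Type*} [Field F] [Fintype F] [DecidableEq F] (r : ℕ) (a : F) : ℤ :=
  ∑ α ∈ Finset.univ.filter (fun α : F => α ≠ 0), lamF r (α + a * α⁻¹)

section Aux

variable {F : Type*} [Field F] [Fintype F] [DecidableEq F]

lemma charF2 {r : ℕ} (hr : 0 < r) (hF : Fintype.card F = 2 ^ r) : CharP F 2 := by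
  have h0 : ((2 ^ r : ℕ) : F) = 0 := by rw [← hF]; exact FiniteField.cast_card_eq_zero F
  have h2 : (2 : F) = 0 := by
    have h : ((2 : F)) ^ r = 0 := by push_cast at h0; exact_mod_cast h0
    exact pow_eq_zero_iff (by omega) |>.mp h
  have hd : ringChar F ∣ 2 := ringChar.dvd (by exact_mod_cast h2)
  have : ringChar F = 2 :=
    ((Nat.dvd_prime Nat.prime_two).mp hd).resolve_left CharP.ringChar_ne_one
  exact ringChar.of_eq this

variable {r : ℕ} (hr : 0 < r) (hF : Fintype.card F = 2 ^ r)

include hr hF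

lemma trF_add (x y : F) : trF r (x + y) = trF r x + trF r y := by
  haveI := charF2 hr hF
  haveI : Fact (Nat.Prime 2) := ⟨Nat.prime_two⟩
  unfold trF
  rw [← Finset.sum_add_distrib]
  exact Finset.sum_congr rfl fun i _ => add_pow_char_pow ..

lemma trF_sq (x : F) : trF r x ^ 2 = trF r x := by
  haveI := charF2 hr hF
  haveI : Fact (Nat.Prime 2) := ⟨Nat.prime_two⟩
  have h : trF r x ^ 2 = ∑ i ∈ Finset.range r, x ^ (2 ^ (i + 1)) := by
    unfold trF
    rw [sum_pow_char]
    exact Finset.sum_congr rfl fun i _ => by rw [← pow_mul, ← pow_succ]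
  have h2 : ∑ i ∈ Finset.range r, x ^ (2 ^ (i + 1))
      = (∑ i ∈ Finset.range (r + 1), x ^ (2 ^ i)) - x ^ (2 ^ 0) := by
    rw [Finset.sum_range_succ' (fun i => x ^ (2 ^ i)) r]
    ring
  have h3 : (∑ i ∈ Finset.range (r + 1), x ^ (2 ^ i)) = trF r x + x ^ (2 ^ r) := by
    rw [Finset.sum_range_succ]; rfl
  have hx : x ^ (2 ^ r) = x := by rw [← hF]; exact FiniteField.pow_card x
  rw [h, h2, h3, hx, pow_zero, pow_one]
  ring

lemma trF_sq' (x : F) : trF r (x ^ 2) = trF r x := by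
  haveI := charF2 hr hF
  haveI : Fact (Nat.Prime 2) := ⟨Nat.prime_two⟩
  have h : trF r (x ^ 2) = trF r x ^ 2 := by
    unfold trF
    rw [sum_pow_char]
    exact Finset.sum_congr rfl fun i _ => by
      rw [← pow_mul, ← pow_mul, mul_comm]
  rw [h, trF_sq hr hF]

lemma trF_mem (x : F) : trF r x = 0 ∨ trF r x = 1 := by
  have h := trF_sq hr hF x
  have h2 : trF r x * (trF r x - 1) = 0 := by linear_combination h
  rcases mul_eq_zero.mp h2 with h' | h'
  · exact Or.inl h'
  · exact Or.inr (by linear_combination h')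

lemma lamF_add (x y : F) : lamF r (x + y) = lamF r x * lamF r y := by
  haveI := charF2 hr hF
  unfold lamF
  rw [trF_add hr hF]
  rcases trF_mem hr hF x with hx | hx <;> rcases trF_mem hr hF y with hy | hy <;>
    simp [hx, hy, CharTwo.add_self_eq_zero]

lemma exists_trF_one : ∃ x : F, trF r x = 1 := by
  by_contra hcon
  push_neg at hcon
  have hall : ∀ x : F, trF r x = 0 := fun x =>
    (trF_mem hr hF x).resolve_right (hcon x)
  set p : Polynomial F := ∑ i ∈ Finset.range r, Polynomial.X ^ (2 ^ i) with hp
  have heval : ∀ x : F, p.eval x = trF r x := by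
    intro x
    simp [hp, trF, Polynomial.eval_finset_sum]
  have hdeg : p.natDegree ≤ 2 ^ (r - 1) := by
    apply Polynomial.natDegree_sum_le_of_forall_le
    intro i hi
    rw [Polynomial.natDegree_X_pow]
    exact Nat.pow_le_pow_right (by norm_num) (by simp at hi; omega)
  have hzero : p = 0 := by
    apply Polynomial.eq_zero_of_natDegree_lt_card_of_eval_eq_zero p Function.injective_id
    · intro x; rw [heval]; exact hall x
    · rw [hF]
      calc p.natDegree ≤ 2 ^ (r - 1) := hdeg
        _ < 2 ^ r := Nat.pow_lt_pow_right (by norm_num) (by omega)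
  have hcoef : p.coeff (2 ^ (r - 1)) = 1 := by
    rw [hp, Polynomial.finset_sum_coeff]
    rw [Finset.sum_eq_single (r - 1)]
    · simp
    · intro i hi hne
      rw [Polynomial.coeff_X_pow, if_neg]
      intro h
      exact hne (Nat.pow_right_injective (le_refl 2) h.symm)
    · intro h
      simp at h
      omega
  rw [hzero] at hcoef
  simp at hcoef

end Aux

/-- For every `a ∈ F_q*`,
`∑_{α ∈ F_q, α ≠ 0, α ≠ 1} λ(a·(α² + α)⁻¹) = K(a) − 1`. -/
theorem sum_lam_artinSchreier_inv {F : Type*} [Field F] [Fintype F] [DecidableEq F]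
    (r : ℕ) (hr : 0 < r) (hF : Fintype.card F = 2 ^ r)
    (a : F) (ha : a ≠ 0) :
    ∑ α ∈ Finset.univ.filter (fun α : F => α ≠ 0 ∧ α ≠ 1),
        lamF r (a * (α ^ 2 + α)⁻¹) = Kloos r a - 1 := by
  haveI := charF2 hr hF
  classical
  obtain ⟨x₀, hx₀⟩ := exists_trF_one hr hF
  set c : F → ℤ := fun β => lamF r (a * β⁻¹) with hc
  set P : F → F := fun α => α ^ 2 + α with hPdef
  have hlam0 : lamF r (0 : F) = 1 := by
    unfold lamF trF
    rw [if_pos (Finset.sum_eq_zero fun i _ => zero_pow (by positivity))]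
  have hc0 : c 0 = 1 := by simp only [hc, inv_zero, mul_zero]; exact hlam0
  -- the trace of P α is zero
  have hPtr : ∀ α : F, trF r (P α) = 0 := by
    intro α
    rw [hPdef]
    simp only
    rw [trF_add hr hF, trF_sq' hr hF, CharTwo.add_self_eq_zero]
  -- fibers of P
  have hfib : ∀ α β : F, P β = P α ↔ β = α ∨ β = α + 1 := by
    intro α β
    constructor
    · intro h
      have h2 : (β + α) * ((β + α) + 1) = 0 := by
        have : (β + α) * ((β + α) + 1) = (β ^ 2 + β) + (α ^ 2 + α) := by
          ring_nf
          rw [CharTwo.two_eq_zero]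
          ring
        rw [this, hPdef] at *
        simp only at h ⊢
        rw [h, CharTwo.add_self_eq_zero]
      rcases mul_eq_zero.mp h2 with h' | h'
      · left
        have hn := CharTwo.neg_eq (R := F) α
        linear_combination h' + hn
      · right
        have hn := CharTwo.neg_eq (R := F) (α + 1)
        linear_combination h' + hn
    · rintro (rfl | rfl)
      · rfl
      · show P (α + 1) = P α
        simp only [hPdef]
        have h2 := CharTwo.two_eq_zero (R := F)
        linear_combination (α + 1) * h2
  have hne : ∀ α : F, α ≠ α + 1 := by
    intro α h
    have : (1 : F) = 0 := by linear_combination -h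
    exact one_ne_zero this
  -- each fiber (over an element of the image) has exactly 2 elements
  have hfibcard : ∀ β ∈ Finset.univ.image P,
      (Finset.univ.filter (fun α : F => P α = β)).card = 2 := by
    intro β hβ
    obtain ⟨α, -, rfl⟩ := Finset.mem_image.mp hβ
    have : Finset.univ.filter (fun γ : F => P γ = P α) = {α, α + 1} := by
      ext γ
      simp [hfib α γ]
    rw [this, Finset.card_insert_of_notMem (by simp [hne α]), Finset.card_singleton]
  -- image of P = kernel of trace
  set K : Finset F := Finset.univ.filter (fun β : F => trF r β = 0) with hK
  have hsub : Finset.univ.image P ⊆ K := by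
    intro β hβ
    obtain ⟨α, -, rfl⟩ := Finset.mem_image.mp hβ
    simp [hK, hPtr α]
  have hcardIm : 2 * (Finset.univ.image P).card = 2 ^ r := by
    have := Finset.card_eq_sum_card_image P (Finset.univ : Finset F)
    rw [Finset.card_univ, hF] at this
    rw [this, Finset.sum_congr rfl hfibcard, Finset.sum_const, smul_eq_mul, mul_comm]
  have hcardK : 2 * K.card = 2 ^ r := by
    set K1 : Finset F := Finset.univ.filter (fun β : F => ¬ trF r β = 0) with hK1
    have hsplit : K.card + K1.card = 2 ^ r := by
      rw [hK, hK1, Finset.card_filter_add_card_filter_not, Finset.card_univ, hF]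
    have hbij : K.card = K1.card := by
      apply Finset.card_bij (fun x _ => x + x₀)
      · intro x hx
        simp only [hK, Finset.mem_filter] at hx
        simp only [hK1, Finset.mem_filter, Finset.mem_univ, true_and]
        rw [trF_add hr hF, hx.2, hx₀, zero_add]
        exact one_ne_zero
      · intro x hx y hy h
        exact add_right_cancel h
      · intro y hy
        refine ⟨y + x₀, ?_, by rw [add_assoc, CharTwo.add_self_eq_zero, add_zero]⟩
        simp only [hK1, Finset.mem_filter] at hy
        simp only [hK, Finset.mem_filter, Finset.mem_univ, true_and]
        rw [trF_add hr hF, hx₀]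
        rcases trF_mem hr hF y with h0 | h1
        · exact absurd h0 hy.2
        · rw [h1, CharTwo.add_self_eq_zero]
    omega
  have hIm : Finset.univ.image P = K :=
    Finset.eq_of_subset_of_card_le hsub (by omega)
  -- total sum over F of c ∘ P
  have htot : ∑ α : F, c (P α) = 2 * ∑ β ∈ K, c β := by
    rw [Finset.sum_comp c P, hIm, Finset.mul_sum]
    apply Finset.sum_congr rfl
    intro β hβ
    rw [← hIm] at hβ
    rw [hfibcard β hβ]
    push_cast
    ring
  -- split the total sum into {0,1} and the rest
  have hsplitS : ∑ α : F, c (P α)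
      = (∑ α ∈ Finset.univ.filter (fun α : F => α ≠ 0 ∧ α ≠ 1), c (P α)) + 2 := by
    rw [← Finset.sum_filter_add_sum_filter_not Finset.univ (fun α : F => α ≠ 0 ∧ α ≠ 1)]
    congr 1
    have h01 : Finset.univ.filter (fun α : F => ¬(α ≠ 0 ∧ α ≠ 1)) = {0, 1} := by
      ext α
      simp only [Finset.mem_filter, Finset.mem_univ, true_and, Finset.mem_insert,
        Finset.mem_singleton]
      push_neg
      constructor
      · intro h
        by_cases h0 : α = 0
        · exact Or.inl h0
        · exact Or.inr (h h0)
      · rintro (rfl | rfl) <;> simp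
    rw [h01]
    have hP0 : P 0 = 0 := by rw [hPdef]; ring
    have hP1 : P 1 = 0 := by
      rw [hPdef]; simp only; rw [one_pow, CharTwo.add_self_eq_zero]
    rw [Finset.sum_pair (by exact fun h => one_ne_zero h.symm), hP0, hP1, hc0]
    norm_num
  -- LHS equals ∑ over S of c (P α)
  have hLHS : ∑ α ∈ Finset.univ.filter (fun α : F => α ≠ 0 ∧ α ≠ 1),
      lamF r (a * (α ^ 2 + α)⁻¹)
      = ∑ α ∈ Finset.univ.filter (fun α : F => α ≠ 0 ∧ α ≠ 1), c (P α) := rfl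
  -- now the Kloosterman side
  -- total character sum is zero
  have hsumlam : ∑ x : F, lamF r x = 0 := by
    have hshift : ∑ x : F, lamF r (x + x₀) = ∑ x : F, lamF r x :=
      Fintype.sum_equiv (Equiv.addRight x₀) _ _ (fun x => rfl)
    have hneg : ∀ x : F, lamF r (x + x₀) = - lamF r x := by
      intro x
      rw [lamF_add hr hF]
      have : lamF r x₀ = -1 := by
        unfold lamF
        rw [if_neg (by rw [hx₀]; exact one_ne_zero)]
      rw [this]
      ring
    have h2 : ∑ x : F, lamF r (x + x₀) = - ∑ x : F, lamF r x := by
      rw [Finset.sum_congr rfl fun x _ => hneg x, Finset.sum_neg_distrib]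
    rw [hshift] at h2
    linarith
  have htr0 : trF r (0 : F) = 0 :=
    Finset.sum_eq_zero fun i _ => zero_pow (by positivity)
  -- sum of c over nonzero elements is -1
  have hcsum : ∑ γ ∈ Finset.univ.filter (fun γ : F => γ ≠ 0), c γ = -1 := by
    have hbij : ∑ γ ∈ Finset.univ.filter (fun γ : F => γ ≠ 0), c γ
        = ∑ δ ∈ Finset.univ.filter (fun δ : F => δ ≠ 0), lamF r δ := by
      apply Finset.sum_nbij' (i := fun γ => a * γ⁻¹) (j := fun δ => a * δ⁻¹)
      · intro γ hγ
        simp only [Finset.mem_filter, Finset.mem_univ, true_and] at hγ ⊢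
        exact mul_ne_zero ha (inv_ne_zero hγ)
      · intro δ hδ
        simp only [Finset.mem_filter, Finset.mem_univ, true_and] at hδ ⊢
        exact mul_ne_zero ha (inv_ne_zero hδ)
      · intro γ hγ
        simp only [Finset.mem_filter, Finset.mem_univ, true_and] at hγ
        field_simp
      · intro δ hδ
        simp only [Finset.mem_filter, Finset.mem_univ, true_and] at hδ
        field_simp
      · intro γ hγ
        rfl
    rw [hbij]
    have herase : Finset.univ.filter (fun δ : F => δ ≠ 0) = Finset.univ.erase 0 :=
      Finset.filter_ne' _ _
    rw [herase]
    have h' := Finset.add_sum_erase Finset.univ (fun x : F => lamF r x)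
      (Finset.mem_univ (0 : F))
    simp only [hsumlam, hlam0] at h'
    linarith
  -- split the Kloosterman sum by trace value
  set S0 : ℤ := ∑ γ ∈ (Finset.univ.filter (fun γ : F => γ ≠ 0)).filter
      (fun γ => trF r γ = 0), c γ with hS0
  set S1 : ℤ := ∑ γ ∈ (Finset.univ.filter (fun γ : F => γ ≠ 0)).filter
      (fun γ => ¬ trF r γ = 0), c γ with hS1
  have hS01 : S0 + S1 = -1 := by
    rw [hS0, hS1, Finset.sum_filter_add_sum_filter_not]
    exact hcsum
  have hKloos : Kloos r a = S0 - S1 := by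
    unfold Kloos
    rw [← Finset.sum_filter_add_sum_filter_not
      (Finset.univ.filter (fun γ : F => γ ≠ 0)) (fun γ => trF r γ = 0)
      (fun γ => lamF r (γ + a * γ⁻¹))]
    have e0 : ∀ γ ∈ (Finset.univ.filter (fun γ : F => γ ≠ 0)).filter
        (fun γ => trF r γ = 0), lamF r (γ + a * γ⁻¹) = c γ := by
      intro γ hγ
      simp only [Finset.mem_filter] at hγ
      rw [lamF_add hr hF]
      have : lamF r γ = 1 := by unfold lamF; rw [if_pos hγ.2]
      rw [this, one_mul]
    have e1 : ∀ γ ∈ (Finset.univ.filter (fun γ : F => γ ≠ 0)).filter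
        (fun γ => ¬ trF r γ = 0), lamF r (γ + a * γ⁻¹) = - c γ := by
      intro γ hγ
      simp only [Finset.mem_filter] at hγ
      rw [lamF_add hr hF]
      have : lamF r γ = -1 := by unfold lamF; rw [if_neg hγ.2]
      rw [this]
      ring
    rw [Finset.sum_congr rfl e0, Finset.sum_congr rfl e1, Finset.sum_neg_distrib]
    try rw [hS0, hS1]
    try ring
  -- the sum over K
  have hKsum : ∑ β ∈ K, c β = 1 + S0 := by
    have h0K : (0 : F) ∈ K := by simp [hK, htr0]
    rw [← Finset.add_sum_erase K c h0K, hc0]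
    congr 1
    apply Finset.sum_congr _ (fun _ _ => rfl)
    ext γ
    simp only [Finset.mem_erase, hK, Finset.mem_filter, Finset.mem_univ, true_and]
    try tauto
  -- put everything together
  rw [hLHS, hKloos]
  have : (∑ α ∈ Finset.univ.filter (fun α : F => α ≠ 0 ∧ α ≠ 1), c (P α)) + 2
      = 2 * (1 + S0) := by
    rw [← hsplitS, htot, hKsum]
  linarith
end

section
/- Assume r ≥ 3. The map c_1 : F_q → F_2^{q−2} sending a to (tr(a·γ_1^{-1}), ..., tr(a·γ_{q/2−1}^{-1}), tr(a·γ_1^{-1}), ..., tr(a·γ_{q/2−1}^{-1})) is an injective F_2-linear (additive) map, and its image is exactly the dual code C_1^⊥ = {w ∈ F_2^{q−2} : Σ_l w_l·u_l = 0 in F_2 for all u ∈ C_1}. In particular C_1^⊥ has exactly q elements. -/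
open Finset

/-- The trace map with values in `F_2 = ZMod 2` (the value of `trF` is always `0` or `1`). -/
def tr2 {F : Type*} [Field F] [DecidableEq F] (r : ℕ) (x : F) : ZMod 2 :=
  if trF r x = 0 then 0 else 1

/-- The binary linear code `C = {u ∈ F_2^n : ∑_l u_l·v_l = 0 in F_q}`, where `u_l ∈ F_2`
acts on `F_q` through the inclusion `F_2 ⊆ F_q`. -/
def codeSet {F : Type*} [Field F] {n : ℕ} (v : Fin n → F) : Set (Fin n → ZMod 2) :=
  {u | ∑ l, (u l).val • v l = 0}

/-- The dual code `C^⊥ = {w ∈ F_2^n : ∑_l w_l·u_l = 0 in F_2 for all u ∈ C}`. -/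
def dualSet {F : Type*} [Field F] {n : ℕ} (v : Fin n → F) : Set (Fin n → ZMod 2) :=
  {w | ∀ u ∈ codeSet v, ∑ l, w l * u l = 0}

/-- The vector `(g_1⁻¹, …, g_m⁻¹, g_1⁻¹, …, g_m⁻¹) ∈ F_q^n`, where `n = m + m`. -/
def doubledInvVec {F : Type*} [Field F] {m n : ℕ} (g : Fin m → F) (hN : n = m + m) :
    Fin n → F :=
  fun l => (Fin.append g g (Fin.cast hN l))⁻¹

/-- The codeword map `a ↦ (tr(a·v_1), …, tr(a·v_n)) ∈ F_2^n`. -/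
def cw {F : Type*} [Field F] [DecidableEq F] (r : ℕ) {n : ℕ} (v : Fin n → F) (a : F) :
    Fin n → ZMod 2 :=
  fun l => tr2 r (a * v l)

/-!
Identify `tr2` with the trace `Tr : F → 𝔽₂`. The trace form is nondegenerate, so
`a ↦ Tr (a * ·)` is an isomorphism `F ≃ F^*`; hence the image of `c_1` is
`{(f v_l)_l : f ∈ F^*}`, which is the annihilator of the kernel of `u ↦ ∑ u_l v_l`,
that is `C_1^⊥`.

For injectivity, Artin–Schreier (`Θ = ker Tr`, by a dimension count) turns the hypothesis
`Tr (a / β) = 0` for all `β ∈ Θ \ {0}` into: the involution `x ↦ a / x` of `Fˣ` preserves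
`ker Tr`, so `Tr (a / x) = Tr x` for every `x ≠ 0`. Applied to `x`, `t x` and `-(1 + t) x`,
which sum to `0`, this gives `Tr (a / x * (1 + t⁻¹ - (1 + t)⁻¹)) = 0` for all `x`, so if
`a ≠ 0` nondegeneracy forces `t² + t + 1 = 0`; this fails for a suitable `t` once `q > 4`.
-/

open Module Polynomial

theorem orthogonal_ker_linearCombination_eq_range_dual {K V ι : Type*} [Field K]
    [AddCommGroup V] [Module K V] [Fintype ι] (v : ι → V) :
    {w : ι → K | ∀ u : ι → K, ∑ l, u l • v l = 0 → ∑ l, w l * u l = 0} =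
      Set.range fun f : Dual K V => fun l => f (v l) := by
  classical
  ext w
  have hdual := SetLike.ext_iff.mp
    (LinearMap.range_dualMap_eq_dualAnnihilator_ker (Fintype.linearCombination K v))
    (Fintype.linearCombination K w)
  simp only [Submodule.mem_dualAnnihilator, LinearMap.mem_ker, Fintype.linearCombination_apply,
    LinearMap.mem_range, smul_eq_mul] at hdual
  simp only [Set.mem_ofPred_eq, Set.mem_range, mul_comm (w _)]
  rw [← hdual]
  refine exists_congr fun f => ⟨fun h => funext fun l => ?_, fun h => ?_⟩
  · simpa using LinearMap.congr_fun h (Pi.single l 1)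
  · ext l
    simp [← h]

theorem dualSet_eq_range_dual {F : Type*} [Field F] [Module (ZMod 2) F] {n : ℕ}
    (v : Fin n → F) :
    dualSet v = Set.range fun f : Dual (ZMod 2) F => fun l => f (v l) := by
  rw [← orthogonal_ker_linearCombination_eq_range_dual]
  simp only [dualSet, codeSet, ← Nat.cast_smul_eq_nsmul (ZMod 2), ZMod.natCast_zmod_val]
  rfl

theorem inv_mem_range_doubledInvVec {F : Type*} [Field F] {m n : ℕ} (g : Fin m → F)
    (hN : n = m + m) (j : Fin m) : (g j)⁻¹ ∈ Set.range (doubledInvVec g hN) :=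
  ⟨Fin.cast hN.symm (Fin.castAdd m j), by simp [doubledInvVec]⟩

theorem charP_two_of_card_eq_two_pow {F : Type*} [Field F] [Fintype F] {r : ℕ}
    (hF : Fintype.card F = 2 ^ r) : CharP F 2 := by
  have hq : ((2 ^ r : ℕ) : F) = 0 := hF ▸ FiniteField.cast_card_eq_zero F
  push_cast at hq
  exact CharTwo.of_one_ne_zero_of_two_eq_zero one_ne_zero ((pow_eq_zero_iff'.mp hq).1)

theorem exists_mul_add_one_mul_sq_add_add_one_ne_zero {F : Type*} [Field F]
    (hF : 4 < Nat.card F) : ∃ t : F, t * (t + 1) * (t ^ 2 + t + 1) ≠ 0 := by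
  have : Finite F := Nat.finite_of_card_ne_zero (by omega)
  have hmonic : (X * (X + 1) * (X ^ 2 + X + 1) : F[X]).Monic := by monicity!
  have hdeg : (X * (X + 1) * (X ^ 2 + X + 1) : F[X]).natDegree = 4 := by compute_degree!
  obtain ⟨t, ht⟩ := exists_eval_ne_zero_of_natDegree_lt_card _ hmonic.ne_zero
    (by rw [hdeg, ← Nat.cast_card]; exact_mod_cast hF)
  exact ⟨t, by simpa using ht⟩

namespace FiniteField

variable {F : Type*} [Field F] [Finite F] [Algebra (ZMod 2) F]

theorem finrank_zmod_two_of_card_eq_two_pow {r : ℕ} (hF : Nat.card F = 2 ^ r) : finrank (ZMod 2) F = r := by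
  have := Fintype.ofFinite F
  have hcard := Module.card_eq_pow_finrank (K := ZMod 2) (V := F)
  rw [ZMod.card, ← Nat.card_eq_fintype_card, hF] at hcard
  exact (Nat.pow_right_injective le_rfl hcard).symm

theorem trF_eq_algebraMap_trace {r : ℕ} (hr : finrank (ZMod 2) F = r) (x : F) :
    trF r x = algebraMap (ZMod 2) F (Algebra.trace (ZMod 2) F x) := by
  rw [algebraMap_trace_eq_sum_pow, Nat.card_zmod, hr, trF]

theorem tr2_eq_trace [DecidableEq F] {r : ℕ} (hr : finrank (ZMod 2) F = r) (x : F) :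
    tr2 r x = Algebra.trace (ZMod 2) F x := by
  simp only [tr2, trF_eq_algebraMap_trace hr, FaithfulSMul.algebraMap_eq_zero_iff]
  generalize Algebra.trace (ZMod 2) F x = c
  revert c
  decide

theorem cw_eq_trace_mul [DecidableEq F] {r n : ℕ} (hr : finrank (ZMod 2) F = r)
    (v : Fin n → F) : cw r v = fun a l => Algebra.trace (ZMod 2) F (a * v l) := by
  ext a l
  exact tr2_eq_trace hr _

theorem range_trace_mul_eq_range_dual {ι : Type*} (v : ι → F) :
    (Set.range fun a l => Algebra.trace (ZMod 2) F (a * v l)) =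
      Set.range fun f : Dual (ZMod 2) F => fun l => f (v l) :=
  ((Algebra.traceForm (ZMod 2) F).toDual
    (traceForm_nondegenerate (ZMod 2) F)).surjective.range_comp fun f l => f (v l)

theorem trace_sq_add_self (x : F) : Algebra.trace (ZMod 2) F (x ^ 2 + x) = 0 := by
  have hfrob : Algebra.trace (ZMod 2) F (x ^ 2) = Algebra.trace (ZMod 2) F x := by
    simpa using Algebra.trace_eq_of_algEquiv (frobeniusAlgEquivOfAlgebraic (ZMod 2) F) x
  rw [map_add, hfrob, CharTwo.add_self_eq_zero]

theorem trace_ne_zero : Algebra.trace (ZMod 2) F ≠ 0 := fun h =>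
  one_ne_zero ((traceForm_nondegenerate (ZMod 2) F).1 1 fun y => by simp [h])

variable (F) in
noncomputable def artinSchreier : F →ₗ[ZMod 2] F :=
  (frobeniusAlgEquivOfAlgebraic (ZMod 2) F).toLinearMap + LinearMap.id

theorem artinSchreier_apply (x : F) : artinSchreier F x = x ^ 2 + x := by
  simp [artinSchreier]

theorem ker_artinSchreier_le_range_algebraMap :
    LinearMap.ker (artinSchreier F) ≤ LinearMap.range (Algebra.linearMap (ZMod 2) F) := by
  intro x hx
  rw [LinearMap.mem_ker, artinSchreier_apply] at hx
  rcases mul_eq_zero.mp (show x * (x + 1) = 0 by linear_combination hx) with h | h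
  · exact ⟨0, by simp [h]⟩
  · exact ⟨-1, by rw [Algebra.linearMap_apply, map_neg, map_one, eq_neg_of_add_eq_zero_left h]⟩

theorem range_artinSchreier :
    LinearMap.range (artinSchreier F) = LinearMap.ker (Algebra.trace (ZMod 2) F) := by
  have hle : LinearMap.range (artinSchreier F) ≤ LinearMap.ker (Algebra.trace (ZMod 2) F) := by
    rintro _ ⟨x, rfl⟩
    rw [LinearMap.mem_ker, artinSchreier_apply, trace_sq_add_self]
  refine Submodule.eq_of_le_of_finrank_le hle ?_
  have hker : finrank (ZMod 2) (LinearMap.ker (artinSchreier F)) ≤ 1 :=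
    (Submodule.finrank_mono ker_artinSchreier_le_range_algebraMap).trans
      ((LinearMap.finrank_range_le _).trans (finrank_self (ZMod 2)).le)
  have htr : finrank (ZMod 2) (LinearMap.ker (Algebra.trace (ZMod 2) F)) < finrank (ZMod 2) F :=
    Submodule.finrank_lt (by simpa [LinearMap.ker_eq_top] using trace_ne_zero)
  have := LinearMap.finrank_range_add_finrank_ker (artinSchreier F)
  omega

theorem exists_sq_add_self_eq_iff_trace_eq_zero (β : F) :
    (∃ α : F, β = α ^ 2 + α) ↔ Algebra.trace (ZMod 2) F β = 0 := by
  rw [← LinearMap.mem_ker, ← range_artinSchreier]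
  simp [artinSchreier_apply, eq_comm]

theorem eq_zero_of_trace_mul_inv_eq_zero (hF : 4 < Nat.card F) {a : F}
    (h : ∀ β ≠ 0, Algebra.trace (ZMod 2) F β = 0 → Algebra.trace (ZMod 2) F (a * β⁻¹) = 0) :
    a = 0 := by
  by_contra ha
  set T := Algebra.trace (ZMod 2) F
  have hinv : ∀ x ≠ 0, T (a * x⁻¹) = T x := by
    intro x hx
    have hinvol : a * (a * x⁻¹)⁻¹ = x := by field_simp
    have hzmod2 : ∀ c d : ZMod 2, (c = 0 ↔ d = 0) → c = d := by decide
    exact hzmod2 _ _ ⟨fun h0 => hinvol ▸ h _ (by simp [ha, hx]) h0, h x hx⟩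
  obtain ⟨t, ht⟩ := exists_mul_add_one_mul_sq_add_add_one_ne_zero hF
  simp only [mul_ne_zero_iff] at ht
  obtain ⟨⟨ht0, ht1⟩, hquad⟩ := ht
  have h1t : 1 + t ≠ 0 := by rwa [add_comm]
  have hs : -(1 + t) ≠ 0 := neg_ne_zero.mpr h1t
  set u : F := 1 + t⁻¹ + (-(1 + t))⁻¹
  have horth : ∀ z, T (u * z) = 0 := by
    intro z
    rcases eq_or_ne z 0 with rfl | hz
    · rw [mul_zero, map_zero]
    set x := a * z⁻¹
    have hx : x ≠ 0 := by simp [x, ha, hz]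
    have hux : u * z = a * x⁻¹ + a * (t * x)⁻¹ + a * (-(1 + t) * x)⁻¹ := by
      simp only [u, x]
      field_simp
    rw [hux, map_add, map_add, hinv x hx, hinv _ (mul_ne_zero ht0 hx),
      hinv _ (mul_ne_zero hs hx), ← map_add, ← map_add,
      show x + t * x + -(1 + t) * x = 0 by ring, map_zero]
  have hu : u = 0 := (traceForm_nondegenerate (ZMod 2) F).1 u horth
  apply hquad
  simp only [u] at hu
  field_simp at hu
  linear_combination hu

theorem injective_trace_mul (hF : 4 < Nat.card F) {ι : Type*} (v : ι → F)
    (hv : ∀ β ≠ 0, Algebra.trace (ZMod 2) F β = 0 → β⁻¹ ∈ Set.range v) :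
    Function.Injective fun a l => Algebra.trace (ZMod 2) F (a * v l) := by
  intro a a' haa'
  rw [← sub_eq_zero]
  refine eq_zero_of_trace_mul_inv_eq_zero hF fun β hβ htr => ?_
  obtain ⟨l, hl⟩ := hv β hβ htr
  rw [← hl, sub_mul, map_sub]
  exact sub_eq_zero.mpr (congr_fun haa' l)

end FiniteField

open FiniteField

theorem c1_injective_additive_range_eq_dual_general {F : Type*} [Field F] [Fintype F] [DecidableEq F]
    (r : ℕ) (hr : 3 ≤ r) (hF : Fintype.card F = 2 ^ r)
    (γ : Fin (2 ^ (r - 1) - 1) → F)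
    (hγran : Set.range γ = {β : F | β ≠ 0 ∧ ∃ α : F, β = α ^ 2 + α})
    (hN : 2 ^ r - 2 = (2 ^ (r - 1) - 1) + (2 ^ (r - 1) - 1)) :
    Function.Injective (cw r (doubledInvVec γ hN)) ∧
    (∀ a a' : F, cw r (doubledInvVec γ hN) (a + a')
        = cw r (doubledInvVec γ hN) a + cw r (doubledInvVec γ hN) a') ∧
    Set.range (cw r (doubledInvVec γ hN)) = dualSet (doubledInvVec γ hN) ∧
    Nat.card (dualSet (doubledInvVec γ hN)) = 2 ^ r := by
  have := charP_two_of_card_eq_two_pow hF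
  let := ZMod.algebra F 2
  rw [← Nat.card_eq_fintype_card] at hF
  have hcw := cw_eq_trace_mul (finrank_zmod_two_of_card_eq_two_pow hF) (doubledInvVec γ hN)
  have hinj : Function.Injective (cw r (doubledInvVec γ hN)) := by
    rw [hcw]
    have hq : 4 < Nat.card F :=
      hF ▸ lt_of_lt_of_le (by norm_num) (Nat.pow_le_pow_right two_pos hr)
    refine injective_trace_mul hq _ fun β hβ htr => ?_
    obtain ⟨j, rfl⟩ : β ∈ Set.range γ :=
      hγran ▸ ⟨hβ, (exists_sq_add_self_eq_iff_trace_eq_zero β).2 htr⟩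
    exact inv_mem_range_doubledInvVec γ hN j
  have hrange : Set.range (cw r (doubledInvVec γ hN)) = dualSet (doubledInvVec γ hN) := by
    rw [hcw, range_trace_mul_eq_range_dual, dualSet_eq_range_dual]
  refine ⟨hinj, fun a a' => ?_, hrange, ?_⟩
  · simp only [hcw, add_mul, map_add]
    rfl
  · rw [← hrange, Nat.card_range_of_injective hinj, hF]

/-- For `r ≥ 3`, the map `c_1 : F_q → F_2^(q−2)`,
`a ↦ (tr(a·γ_1⁻¹), …, tr(a·γ_{q/2−1}⁻¹), tr(a·γ_1⁻¹), …, tr(a·γ_{q/2−1}⁻¹))`,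
where `γ_1, …, γ_{q/2−1}` enumerate the nonzero elements of `Θ(F_q) = {α² + α : α ∈ F_q}`,
is an injective `F_2`-linear (additive) map whose image is exactly the dual code `C_1^⊥`;
in particular `C_1^⊥` has exactly `q` elements. -/
theorem c1_injective_additive_range_eq_dual {F : Type*} [Field F] [Fintype F] [DecidableEq F]
    (r : ℕ) (hr : 3 ≤ r) (hF : Fintype.card F = 2 ^ r)
    (γ : Fin (2 ^ (r - 1) - 1) → F) (hγinj : Function.Injective γ)
    (hγran : Set.range γ = {β : F | β ≠ 0 ∧ ∃ α : F, β = α ^ 2 + α})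
    (hN : 2 ^ r - 2 = (2 ^ (r - 1) - 1) + (2 ^ (r - 1) - 1)) :
    Function.Injective (cw r (doubledInvVec γ hN)) ∧
    (∀ a a' : F, cw r (doubledInvVec γ hN) (a + a')
        = cw r (doubledInvVec γ hN) a + cw r (doubledInvVec γ hN) a') ∧
    Set.range (cw r (doubledInvVec γ hN)) = dualSet (doubledInvVec γ hN) ∧
    Nat.card (dualSet (doubledInvVec γ hN)) = 2 ^ r :=
  c1_injective_additive_range_eq_dual_general r hr hF γ hγran hN
end

section
/- Assume q ≥ 4. For every a ∈ F_q*, the Hamming weight of the vector c_1(a) = (tr(a·γ_1^{-1}), ..., tr(a·γ_{q/2−1}^{-1}), tr(a·γ_1^{-1}), ..., tr(a·γ_{q/2−1}^{-1})) ∈ F_2^{q−2} equals (q − 1 − K(a))/2. -/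
/-!
The map `trF r` is the trace of `F` over `ZMod 2` (`FiniteField.algebraMap_trace_eq_sum_pow`),
so it is additive, surjective and invariant under `x ↦ x²`. Hence the image `Θ(F)` of the
Artin–Schreier map `x ↦ x² + x`, whose kernel is `{0, 1}`, is a subgroup of index 2 contained in
the index-2 subgroup `ker tr`, so `Θ(F) = ker tr`. Writing
`N = #{β ≠ 0 : tr β = 0, tr (a/β) = 1}`, the two halves of `c_1(a)` each have weight `N`.
On the other side, `λ(α + a/α) = -1` exactly when `tr α ≠ tr (a/α)`; the involution `α ↦ a/α`
exchanges the two ways this can happen, each of which occurs `N` times, so `K(a) = q - 1 - 4N`.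
-/

open Finset

/-- The Hamming weight of a vector over `F_2`: the number of nonzero coordinates. -/
def wt {n : ℕ} (u : Fin n → ZMod 2) : ℕ :=
  (Finset.univ.filter (fun l => u l ≠ 0)).card

section Trace

variable {F : Type*} [Field F] [Fintype F] [Algebra (ZMod 2) F]

theorem trF_eq_algebraMap_trace {r : ℕ} (hF : Fintype.card F = 2 ^ r) (x : F) :
    trF r x = algebraMap (ZMod 2) F (Algebra.trace (ZMod 2) F x) := by
  have hrank : Module.finrank (ZMod 2) F = r := by
    rw [Module.card_eq_pow_finrank (K := ZMod 2), ZMod.card] at hF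
    exact Nat.pow_right_injective le_rfl hF
  rw [FiniteField.algebraMap_trace_eq_sum_pow, hrank, Nat.card_zmod, trF]

theorem trF_eq_zero_iff {r : ℕ} (hF : Fintype.card F = 2 ^ r) (x : F) :
    trF r x = 0 ↔ Algebra.trace (ZMod 2) F x = 0 := by
  rw [trF_eq_algebraMap_trace hF, map_eq_zero_iff _ (algebraMap (ZMod 2) F).injective]

theorem tr2_eq_trace [DecidableEq F] {r : ℕ} (hF : Fintype.card F = 2 ^ r) (x : F) :
    tr2 r x = Algebra.trace (ZMod 2) F x := by
  simp only [tr2, trF_eq_zero_iff hF]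
  generalize Algebra.trace (ZMod 2) F x = t
  revert t; decide

theorem lamF_eq [DecidableEq F] {r : ℕ} (hF : Fintype.card F = 2 ^ r) (x : F) :
    lamF r x = if Algebra.trace (ZMod 2) F x = 0 then 1 else -1 := by
  simp only [lamF, trF_eq_zero_iff hF]

theorem trace_sq (x : F) : Algebra.trace (ZMod 2) F (x ^ 2) = Algebra.trace (ZMod 2) F x :=
  Algebra.trace_eq_of_algEquiv (FiniteField.frobeniusAlgEquivOfAlgebraic (ZMod 2) F) x

theorem two_mul_card_ker_trace :
    2 * Nat.card (Algebra.trace (ZMod 2) F).toAddMonoidHom.ker = Nat.card F := by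
  have hrange : (Algebra.trace (ZMod 2) F).toAddMonoidHom.range = ⊤ :=
    AddMonoidHom.range_eq_top.mpr (Algebra.trace_surjective (ZMod 2) F)
  rw [← AddSubgroup.card_mul_index (Algebra.trace (ZMod 2) F).toAddMonoidHom.ker,
    AddSubgroup.index_ker, hrange, AddSubgroup.card_top,
    Nat.card_zmod, mul_comm]

end Trace

section ArtinSchreier

variable (F : Type*) [Field F] [CharP F 2]

def artinSchreier : F →+ F :=
  (frobenius F 2).toAddMonoidHom + AddMonoidHom.id F

variable {F}

theorem artinSchreier_apply (x : F) : artinSchreier F x = x ^ 2 + x := rfl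

theorem mem_ker_artinSchreier {x : F} : x ∈ (artinSchreier F).ker ↔ x = 0 ∨ x = 1 := by
  rw [AddMonoidHom.mem_ker, artinSchreier_apply,
    show x ^ 2 + x = x * (x - 1) by rw [CharTwo.sub_eq_add]; ring,
    mul_eq_zero, sub_eq_zero]

theorem card_ker_artinSchreier : Nat.card (artinSchreier F).ker = 2 := by
  have hker : ((artinSchreier F).ker : Set F) = {0, 1} := by
    ext x; exact mem_ker_artinSchreier
  rw [← SetLike.coe_sort_coe, hker, Nat.card_coe_set_eq, Set.ncard_pair zero_ne_one]

theorem two_mul_card_range_artinSchreier :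
    2 * Nat.card (artinSchreier F).range = Nat.card F := by
  rw [← card_ker_artinSchreier (F := F), ← AddSubgroup.index_ker, AddSubgroup.card_mul_index]

theorem range_artinSchreier_eq_ker_trace [Fintype F] [Algebra (ZMod 2) F] :
    (artinSchreier F).range = (Algebra.trace (ZMod 2) F).toAddMonoidHom.ker := by
  refine AddSubgroup.eq_of_le_of_card_ge ?_ ?_
  · rintro _ ⟨x, rfl⟩
    rw [AddMonoidHom.mem_ker, LinearMap.toAddMonoidHom_coe, artinSchreier_apply, map_add,
      trace_sq, CharTwo.add_self_eq_zero]
  · have h1 := two_mul_card_range_artinSchreier (F := F)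
    have h2 := two_mul_card_ker_trace (F := F)
    omega

theorem exists_sq_add_eq_iff_trace_eq_zero [Fintype F] [Algebra (ZMod 2) F] (β : F) :
    (∃ α, β = α ^ 2 + α) ↔ Algebra.trace (ZMod 2) F β = 0 := by
  have := SetLike.ext_iff.mp range_artinSchreier_eq_ker_trace β
  simpa [eq_comm, artinSchreier_apply] using this

end ArtinSchreier

section Kloosterman

variable {F : Type*} [Field F] [Fintype F] [DecidableEq F]

theorem card_filter_swap_mul_inv {a : F} (ha : a ≠ 0) (P : F → F → Prop)
    [∀ x y, Decidable (P x y)] :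
    #{α | α ≠ 0 ∧ P α (a * α⁻¹)} = #{α | α ≠ 0 ∧ P (a * α⁻¹) α} := by
  have hinv : ∀ α : F, α ≠ 0 → a * (a * α⁻¹)⁻¹ = α := fun α hα => by field_simp
  refine card_nbij' (fun α => a * α⁻¹) (fun α => a * α⁻¹) ?_ ?_ ?_ ?_ <;> intro α hα <;>
    simp only [coe_filter, mem_univ, true_and, Set.mem_ofPred_eq] at hα ⊢
  iterate 2 exact ⟨mul_ne_zero ha (inv_ne_zero hα.1), by rw [hinv α hα.1]; exact hα.2⟩
  iterate 2 exact hinv α hα.1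

theorem sum_sign_add_mul_inv (t : F →+ ZMod 2) {a : F} (ha : a ≠ 0) :
    ∑ α ∈ univ.filter (· ≠ 0), (if t (α + a * α⁻¹) = 0 then (1 : ℤ) else -1)
      = Fintype.card F - 1 - 4 * #{α | α ≠ 0 ∧ t α = 0 ∧ t (a * α⁻¹) ≠ 0} := by
  have hsign : ∀ u v : ZMod 2, (if u + v = 0 then (1 : ℤ) else -1)
      = 1 - 2 * (if u = 0 ∧ v ≠ 0 then 1 else 0) - 2 * (if v = 0 ∧ u ≠ 0 then 1 else 0) := by
    decide
  have hswap := card_filter_swap_mul_inv ha (fun x y => t x = 0 ∧ t y ≠ 0)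
  simp only [map_add, hsign, sum_sub_distrib, ← mul_sum, sum_boole, sum_const, nsmul_eq_mul,
    mul_one, filter_filter]
  have hcard : (#{α : F | α ≠ 0} : ℤ) = Fintype.card F - 1 := by
    rw [filter_ne', card_erase_of_mem (mem_univ 0), card_univ, Nat.cast_sub Fintype.card_pos,
      Nat.cast_one]
  rw [hcard, ← hswap]
  ring

end Kloosterman

section Weight

theorem wt_comp_cast {m n : ℕ} (h : n = m) (u : Fin m → ZMod 2) :
    wt (u ∘ Fin.cast h) = wt u := by
  subst h; rfl

theorem wt_append {m n : ℕ} (u : Fin m → ZMod 2) (v : Fin n → ZMod 2) :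
    wt (Fin.append u v) = wt u + wt v := by
  simp only [wt, card_filter, Fin.sum_univ_add, Fin.append_left, Fin.append_right]

variable {F : Type*} [Field F] [DecidableEq F]

theorem cw_doubledInvVec (r : ℕ) {m n : ℕ} (γ : Fin m → F) (hN : n = m + m) (a : F) :
    cw r (doubledInvVec γ hN) a
      = Fin.append (cw r (fun j => (γ j)⁻¹) a) (cw r (fun j => (γ j)⁻¹) a) ∘ Fin.cast hN := by
  funext l
  simp only [cw, doubledInvVec, Function.comp_apply]
  refine Fin.addCases (fun j => ?_) (fun j => ?_) (Fin.cast hN l) <;>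
    simp only [Fin.append_left, Fin.append_right, cw]

theorem wt_cw_doubledInvVec (r : ℕ) {m n : ℕ} (γ : Fin m → F) (hN : n = m + m) (a : F) :
    wt (cw r (doubledInvVec γ hN) a) = 2 * wt (cw r (fun j => (γ j)⁻¹) a) := by
  rw [cw_doubledInvVec, wt_comp_cast, wt_append, two_mul]

end Weight

theorem card_filter_comp_eq_of_range_eq {ι α : Type*} [Fintype ι] [Fintype α] {γ : ι → α}
    (hγ : Function.Injective γ) {p q : α → Prop} [DecidablePred p] [DecidablePred q]
    (hrange : Set.range γ = {x | p x}) :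
    #{i | q (γ i)} = #{x | p x ∧ q x} := by
  refine card_nbij γ (fun i hi => ?_) hγ.injOn (fun x hx => ?_)
  · have hx : γ i ∈ Set.range γ := ⟨i, rfl⟩
    rw [hrange] at hx
    simp only [coe_filter, mem_univ, true_and, Set.mem_ofPred_eq] at hi ⊢
    exact ⟨hx, hi⟩
  · simp only [coe_filter, mem_univ, true_and, Set.mem_ofPred_eq] at hx
    obtain ⟨i, rfl⟩ : x ∈ Set.range γ := hrange ▸ hx.1
    exact ⟨i, by simpa using hx.2, rfl⟩

section Counting

variable {F : Type*} [Field F] [Fintype F] [DecidableEq F] [Algebra (ZMod 2) F]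

theorem kloos_eq {r : ℕ} (hF : Fintype.card F = 2 ^ r) {a : F} (ha : a ≠ 0) :
    Kloos r a = 2 ^ r - 1 - 4 * #{α | α ≠ 0 ∧ Algebra.trace (ZMod 2) F α = 0 ∧
      Algebra.trace (ZMod 2) F (a * α⁻¹) ≠ 0} := by
  simp only [Kloos, lamF_eq hF]
  refine (sum_sign_add_mul_inv (Algebra.trace (ZMod 2) F).toAddMonoidHom ha).trans ?_
  rw [hF]
  push_cast
  rfl

theorem wt_cw_inv {r m : ℕ} (hF : Fintype.card F = 2 ^ r) {γ : Fin m → F}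
    (hγinj : Function.Injective γ)
    (hγran : Set.range γ = {β : F | β ≠ 0 ∧ Algebra.trace (ZMod 2) F β = 0}) (a : F) :
    wt (cw r (fun j => (γ j)⁻¹) a) = #{β | β ≠ 0 ∧ Algebra.trace (ZMod 2) F β = 0 ∧
      Algebra.trace (ZMod 2) F (a * β⁻¹) ≠ 0} := by
  simp only [wt, cw, tr2_eq_trace hF, ← and_assoc]
  exact card_filter_comp_eq_of_range_eq hγinj hγran
    (q := fun β => Algebra.trace (ZMod 2) F (a * β⁻¹) ≠ 0)

end Counting

theorem weight_c1_general {F : Type*} [Field F] [Fintype F] [DecidableEq F]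
    (r : ℕ) (hF : Fintype.card F = 2 ^ r)
    (γ : Fin (2 ^ (r - 1) - 1) → F) (hγinj : Function.Injective γ)
    (hγran : Set.range γ = {β : F | β ≠ 0 ∧ ∃ α : F, β = α ^ 2 + α})
    (hN : 2 ^ r - 2 = (2 ^ (r - 1) - 1) + (2 ^ (r - 1) - 1))
    (a : F) (ha : a ≠ 0) :
    (wt (cw r (doubledInvVec γ hN) a) : ℚ)
      = ((2 ^ r : ℚ) - 1 - (Kloos r a : ℚ)) / 2 := by
  have : CharP F 2 := charP_of_card_eq_prime_pow hF
  let := ZMod.algebra F 2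
  simp only [exists_sq_add_eq_iff_trace_eq_zero] at hγran
  rw [wt_cw_doubledInvVec, wt_cw_inv hF hγinj hγran, kloos_eq hF ha]
  push_cast
  ring

/-- For `q ≥ 4` and every `a ∈ F_q*`, the Hamming weight of
`c_1(a) = (tr(a·γ_1⁻¹), …, tr(a·γ_{q/2−1}⁻¹), tr(a·γ_1⁻¹), …, tr(a·γ_{q/2−1}⁻¹)) ∈ F_2^(q−2)`
equals `(q − 1 − K(a))/2`, where `γ_1, …, γ_{q/2−1}` enumerate the nonzero elements of
`Θ(F_q) = {α² + α : α ∈ F_q}`. -/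
theorem weight_c1 {F : Type*} [Field F] [Fintype F] [DecidableEq F]
    (r : ℕ) (hr : 0 < r) (hq : 4 ≤ 2 ^ r) (hF : Fintype.card F = 2 ^ r)
    (γ : Fin (2 ^ (r - 1) - 1) → F) (hγinj : Function.Injective γ)
    (hγran : Set.range γ = {β : F | β ≠ 0 ∧ ∃ α : F, β = α ^ 2 + α})
    (hN : 2 ^ r - 2 = (2 ^ (r - 1) - 1) + (2 ^ (r - 1) - 1))
    (a : F) (ha : a ≠ 0) :
    (wt (cw r (doubledInvVec γ hN) a) : ℚ)
      = ((2 ^ r : ℚ) - 1 - (Kloos r a : ℚ)) / 2 :=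
  weight_c1_general r hF γ hγinj hγran hN a ha
end
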